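/- Let N and M be triangulated subcategories of an essentially small triangulated category T with N thick, and let Q : T → T/N be the Verdier quotient functor. Then the smallest triangulated subcategory N ∨ M of T containing both N and M equals the preimage Q^{-1}(im(Q|_M)), where im(Q|_M) is the smallest triangulated subcategory of T/N containing Q(m) for all objects m of M. -/

import Mathlib

/-!
`Q⁻¹(im (Q|_M))` is triangulated and contains `N`, which `Q` kills, and `M`; this gives one
inclusion. For the other, the essential image of `N ∨ M` under `Q` is triangulated, because every
distinguished triangle of `T/N` is isomorphic to the image of one of `T` and because `N ∨ M` is
saturated: `Q x ≅ Q y` with `y ∈ N ∨ M` forces `x ∈ N ∨ M`. Indeed, writing the isomorphism as a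
left fraction `x → z ← y`, both arrows are inverted by `Q`, so their cones lie in the kernel of
`Q`, and this kernel is `N` since `N` is thick.
-/
open CategoryTheory CategoryTheory.Limits CategoryTheory.Pretriangulated

universe w v u v₂ u₂ v₃ u₃ v₄ u₄ v₅ u₅ v₆ u₆

structure IsTriangulatedSub {C : Type u} [Category.{v} C] [HasZeroObject C] [HasShift C ℤ]
    [Preadditive C] [∀ n : ℤ, (shiftFunctor C n).Additive] [Pretriangulated C]
    (P : C → Prop) : Prop where
  iso_closed : ∀ ⦃x y : C⦄, (x ≅ y) → P x → P y
  zero : ∀ x : C, IsZero x → P x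
  shift : ∀ (x : C) (n : ℤ), P x → P (x⟦n⟧)
  two_of_three₁₂ : ∀ T ∈ distTriang C, P T.obj₁ → P T.obj₂ → P T.obj₃
  two_of_three₂₃ : ∀ T ∈ distTriang C, P T.obj₂ → P T.obj₃ → P T.obj₁
  two_of_three₁₃ : ∀ T ∈ distTriang C, P T.obj₁ → P T.obj₃ → P T.obj₂

def IsSummandClosed {C : Type u} [Category.{v} C] [Preadditive C]
    [HasBinaryBiproducts C] (P : C → Prop) : Prop :=
  ∀ x y : C, P (x ⊞ y) → P x ∧ P y

def coneIn {C : Type u} [Category.{v} C] [HasZeroObject C] [HasShift C ℤ]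
    [Preadditive C] [∀ n : ℤ, (shiftFunctor C n).Additive] [Pretriangulated C]
    (P : C → Prop) : MorphismProperty C :=
  fun X Y f => ∃ (Z : C) (g : Y ⟶ Z) (h : Z ⟶ X⟦(1 : ℤ)⟧),
    (Triangle.mk f g h ∈ distTriang C) ∧ P Z


/-- The triangulated closure of a family `S` of objects: the smallest triangulated
subcategory containing `S`, realized as the intersection of all triangulated
subcategories containing `S`. -/
def triClosure {C : Type u} [Category.{v} C] [HasZeroObject C] [HasShift C ℤ]
    [Preadditive C] [∀ n : ℤ, (shiftFunctor C n).Additive] [Pretriangulated C]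
    (S : C → Prop) : C → Prop :=
  fun x => ∀ P : C → Prop, IsTriangulatedSub P → (∀ z, S z → P z) → P x

/-- The thick closure of a family `S` of objects: the smallest thick subcategory
containing `S`, realized as the intersection of all thick subcategories containing
`S`. -/
def thickClosure {C : Type u} [Category.{v} C] [HasZeroObject C] [HasShift C ℤ]
    [Preadditive C] [∀ n : ℤ, (shiftFunctor C n).Additive] [Pretriangulated C]
    [HasBinaryBiproducts C] (S : C → Prop) : C → Prop :=
  fun x => ∀ P : C → Prop, IsTriangulatedSub P → IsSummandClosed P →
    (∀ z, S z → P z) → P x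

open ZeroObject

section Pretriangulated

variable {C : Type u} [Category.{v} C] [HasZeroObject C] [HasShift C ℤ]
    [Preadditive C] [∀ n : ℤ, (shiftFunctor C n).Additive] [Pretriangulated C]

lemma triClosure_isTriangulatedSub (S : C → Prop) : IsTriangulatedSub (triClosure S) where
  iso_closed _ _ e hx P hP hS := hP.iso_closed e (hx P hP hS)
  zero x hx _ hP _ := hP.zero x hx
  shift x n hx P hP hS := hP.shift x n (hx P hP hS)
  two_of_three₁₂ T hT h₁ h₂ P hP hS := hP.two_of_three₁₂ T hT (h₁ P hP hS) (h₂ P hP hS)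
  two_of_three₂₃ T hT h₂ h₃ P hP hS := hP.two_of_three₂₃ T hT (h₂ P hP hS) (h₃ P hP hS)
  two_of_three₁₃ T hT h₁ h₃ P hP hS := hP.two_of_three₁₃ T hT (h₁ P hP hS) (h₃ P hP hS)

lemma triClosure_of_mem {S : C → Prop} {x : C} (hx : S x) : triClosure S x :=
  fun _ _ hS => hS x hx

lemma coneIn_eq_trW (P : C → Prop) : coneIn P = ObjectProperty.trW P := by
  ext X Y f
  simp [coneIn, ObjectProperty.trW_iff]

end Pretriangulated

lemma CategoryTheory.ObjectProperty.map_iff_of_iso {C : Type u} [Category.{v} C] {D : Type u₂}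
    [Category.{v₂} D] {P : C → Prop} {F : C ⥤ D}
    (hsat : ∀ ⦃x y : C⦄, (F.obj x ≅ F.obj y) → P y → P x) {x : C} {y : D} (e : F.obj x ≅ y) :
    ObjectProperty.map P F y ↔ P x :=
  ⟨fun ⟨_, hx', ⟨e'⟩⟩ => hsat (e ≪≫ e'.symm) hx', fun hx => ⟨x, hx, ⟨e⟩⟩⟩

namespace IsTriangulatedSub

variable {C : Type u} [Category.{v} C] [HasZeroObject C] [HasShift C ℤ]
    [Preadditive C] [∀ n : ℤ, (shiftFunctor C n).Additive] [Pretriangulated C]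

lemma of_shift {P : C → Prop} (hP : IsTriangulatedSub P) {x : C} (n : ℤ) (hx : P (x⟦n⟧)) :
    P x :=
  hP.iso_closed (shiftShiftNeg x n) (hP.shift _ (-n) hx)

lemma isTriangulated {P : C → Prop} (hP : IsTriangulatedSub P) :
    ObjectProperty.IsTriangulated P where
  exists_zero := ⟨0, isZero_zero C, hP.zero 0 (isZero_zero C)⟩
  isStableUnderShiftBy n := ⟨fun x hx => hP.shift x n hx⟩
  ext₂' T hT h₁ h₃ := ObjectProperty.le_isoClosure P _ (hP.two_of_three₁₃ T hT h₁ h₃)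

lemma mem_of_coneIn_zero {P : C → Prop} (hP : IsTriangulatedSub P) (hthick : IsSummandClosed P)
    {X Y : C} (h : coneIn P (0 : X ⟶ Y)) : P X := by
  obtain ⟨Z, g, h, hT, hZ⟩ := h
  -- the cone of `0 : X ⟶ Y` is `Y ⊞ X⟦1⟧`
  obtain ⟨e, -⟩ := exists_iso_binaryBiproduct_of_distTriang _ (rot_of_distTriang _ hT)
    (neg_eq_zero.2 ((shiftFunctor C (1 : ℤ)).map_zero X Y))
  exact hP.of_shift 1 (hthick _ _ (hP.iso_closed e hZ)).2

variable {D : Type u₂} [Category.{v₂} D] [HasZeroObject D] [HasShift D ℤ]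
    [Preadditive D] [∀ n : ℤ, (shiftFunctor D n).Additive] [Pretriangulated D]

lemma inverseImage {P : D → Prop} (hP : IsTriangulatedSub P) (F : C ⥤ D) [F.CommShift ℤ]
    [F.IsTriangulated] : IsTriangulatedSub (ObjectProperty.inverseImage P F) where
  iso_closed _ _ e hx := hP.iso_closed (F.mapIso e) hx
  zero _ hx := hP.zero _ (F.map_isZero hx)
  shift x n hx := hP.iso_closed ((F.commShiftIso n).app x).symm (hP.shift _ n hx)
  two_of_three₁₂ T hT := hP.two_of_three₁₂ _ (F.map_distinguished T hT)
  two_of_three₂₃ T hT := hP.two_of_three₂₃ _ (F.map_distinguished T hT)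
  two_of_three₁₃ T hT := hP.two_of_three₁₃ _ (F.map_distinguished T hT)

section Map

variable {P : C → Prop} {F : C ⥤ D} [F.CommShift ℤ] [F.IsTriangulated] [F.mapArrow.EssSurj]

lemma exists_distTriang_map_iff (hsat : ∀ ⦃x y : C⦄, (F.obj x ≅ F.obj y) → P y → P x)
    (T : Triangle D) (hT : T ∈ distTriang D) :
    ∃ T' ∈ distTriang C, (ObjectProperty.map P F T.obj₁ ↔ P T'.obj₁) ∧
      (ObjectProperty.map P F T.obj₂ ↔ P T'.obj₂) ∧
      (ObjectProperty.map P F T.obj₃ ↔ P T'.obj₃) := by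
  obtain ⟨T', hT', ⟨e⟩⟩ := F.mem_mapTriangle_essImage_of_distinguished T hT
  exact ⟨T', hT', ObjectProperty.map_iff_of_iso hsat (Triangle.π₁.mapIso e),
    ObjectProperty.map_iff_of_iso hsat (Triangle.π₂.mapIso e),
    ObjectProperty.map_iff_of_iso hsat (Triangle.π₃.mapIso e)⟩

lemma map (hP : IsTriangulatedSub P) (hsat : ∀ ⦃x y : C⦄, (F.obj x ≅ F.obj y) → P y → P x) :
    IsTriangulatedSub (ObjectProperty.map P F) where
  iso_closed _ _ e := fun ⟨x, hx, ⟨e'⟩⟩ => ⟨x, hx, ⟨e' ≪≫ e⟩⟩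
  zero _ hy := ⟨0, hP.zero 0 (isZero_zero C), ⟨(F.map_isZero (isZero_zero C)).iso hy⟩⟩
  shift _ n := fun ⟨x, hx, ⟨e⟩⟩ =>
    ⟨x⟦n⟧, hP.shift x n hx, ⟨(F.commShiftIso n).app x ≪≫ (shiftFunctor D n).mapIso e⟩⟩
  two_of_three₁₂ T hT := by
    obtain ⟨T', hT', h₁, h₂, h₃⟩ := exists_distTriang_map_iff hsat T hT
    rw [h₁, h₂, h₃]
    exact hP.two_of_three₁₂ T' hT'
  two_of_three₂₃ T hT := by
    obtain ⟨T', hT', h₁, h₂, h₃⟩ := exists_distTriang_map_iff hsat T hT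
    rw [h₁, h₂, h₃]
    exact hP.two_of_three₂₃ T' hT'
  two_of_three₁₃ T hT := by
    obtain ⟨T', hT', h₁, h₂, h₃⟩ := exists_distTriang_map_iff hsat T hT
    rw [h₁, h₂, h₃]
    exact hP.two_of_three₁₃ T' hT'

end Map

end IsTriangulatedSub

namespace VerdierQuotient

variable {C : Type u} [Category.{v} C] [HasZeroObject C] [HasShift C ℤ]
    [Preadditive C] [∀ n : ℤ, (shiftFunctor C n).Additive] [Pretriangulated C]
    {D : Type u₂} [Category.{v₂} D] {N : C → Prop} (Q : C ⥤ D) [Q.IsLocalization (coneIn N)]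

lemma isLocalization_trW : Q.IsLocalization (ObjectProperty.trW N) :=
  coneIn_eq_trW N ▸ inferInstance

lemma mapArrow_essSurj [IsTriangulated C] (hN : IsTriangulatedSub N) : Q.mapArrow.EssSurj :=
  have := hN.isTriangulated
  have := isLocalization_trW Q (N := N)
  Localization.essSurj_mapArrow Q (ObjectProperty.trW N)

lemma mem_of_isZero_obj [IsTriangulated C] (hN : IsTriangulatedSub N)
    (hthick : IsSummandClosed N) {X : C} (hX : IsZero (Q.obj X)) : N X := by
  have := hN.isTriangulated
  have := isLocalization_trW Q (N := N)
  obtain ⟨_, s, hs, hs0⟩ := (MorphismProperty.map_eq_iff_postcomp Q (ObjectProperty.trW N)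
    (𝟙 X) 0).1 (hX.eq_of_src _ _)
  rw [Category.id_comp, zero_comp] at hs0
  rw [← coneIn_eq_trW, hs0] at hs
  exact hN.mem_of_coneIn_zero hthick hs

variable [HasZeroObject D] [HasShift D ℤ] [Preadditive D] [∀ n : ℤ, (shiftFunctor D n).Additive]
    [Pretriangulated D] [Q.CommShift ℤ] [Q.IsTriangulated]

lemma isZero_obj_of_mem (hN : IsTriangulatedSub N) {X : C} (hX : N X) : IsZero (Q.obj X) := by
  have hX0 : coneIn N (0 : X ⟶ 0) :=
    ⟨_, _, _, rot_of_distTriang _ (contractible_distinguished X), hN.shift X 1 hX⟩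
  have := Localization.inverts Q (coneIn N) _ hX0
  exact (Q.map_isZero (isZero_zero C)).of_iso (asIso (Q.map (0 : X ⟶ 0)))

lemma coneIn_of_isIso_map [IsTriangulated C] (hN : IsTriangulatedSub N)
    (hthick : IsSummandClosed N) {X Y : C} (f : X ⟶ Y) [IsIso (Q.map f)] : coneIn N f := by
  obtain ⟨Z, g, h, hT⟩ := distinguished_cocone_triangle f
  exact ⟨Z, g, h, hT, mem_of_isZero_obj Q hN hthick
    (Triangle.isZero₃_of_isIso₁ _ (Q.map_distinguished _ hT) (inferInstanceAs (IsIso (Q.map f))))⟩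

lemma mem_of_iso_obj [IsTriangulated C] (hN : IsTriangulatedSub N) (hthick : IsSummandClosed N)
    {J : C → Prop} (hJ : IsTriangulatedSub J) (hNJ : ∀ x, N x → J x)
    {X Y : C} (e : Q.obj X ≅ Q.obj Y) (hY : J Y) : J X := by
  have := hN.isTriangulated
  have := isLocalization_trW Q (N := N)
  obtain ⟨φ, hφ⟩ := Localization.exists_leftFraction Q (ObjectProperty.trW N) e.hom
  have : IsIso (Q.map φ.s) := Localization.inverts Q _ φ.s φ.hs
  have : IsIso (Q.map φ.f) := by
    rw [← φ.map_comp_map_s Q (Localization.inverts Q _), ← hφ]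
    infer_instance
  obtain ⟨_, _, _, hTs, hcone_s⟩ := φ.hs
  obtain ⟨_, _, _, hTf, hcone_f⟩ := coneIn_of_isIso_map Q hN hthick φ.f
  have hY' : J φ.Y' := hJ.two_of_three₁₃ _ hTs hY (hNJ _ hcone_s)
  exact hJ.two_of_three₂₃ _ hTf hY' (hNJ _ hcone_f)

end VerdierQuotient

open VerdierQuotient in
/-- Let `N` and `M` be triangulated subcategories of an essentially
small triangulated category `C` with `N` thick, and let `Q : C ⥤ D` be the Verdier
quotient of `C` by `N`. Then the smallest triangulated subcategory `N ∨ M` containing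
`N` and `M` equals the preimage `Q⁻¹(im (Q|_M))`, where `im (Q|_M)` is the smallest
triangulated subcategory of `D` containing `Q(m)` for all objects `m` of `M`. -/
theorem triangulated_join_eq_preimage_image
    {C : Type u} [Category.{v} C] [HasZeroObject C] [HasShift C ℤ] [Preadditive C]
    [∀ n : ℤ, (shiftFunctor C n).Additive] [Pretriangulated C] [IsTriangulated C]
    [HasBinaryBiproducts C] [EssentiallySmall.{w} C]
    {D : Type u₂} [Category.{v₂} D] [HasZeroObject D] [HasShift D ℤ] [Preadditive D]
    [∀ n : ℤ, (shiftFunctor D n).Additive] [Pretriangulated D] [IsTriangulated D]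
    (N M : C → Prop) (hN : IsTriangulatedSub N) (hM : IsTriangulatedSub M)
    (hNthick : IsSummandClosed N)
    (Q : C ⥤ D) [Q.CommShift ℤ] [Q.IsTriangulated] [Q.IsLocalization (coneIn N)] :
    ∀ x : C, triClosure (fun z : C => N z ∨ M z) x ↔
      triClosure (fun y : D => ∃ m : C, M m ∧ Nonempty (y ≅ Q.obj m)) (Q.obj x) := by
  intro x
  set J := triClosure (fun z : C => N z ∨ M z)
  set I := triClosure (fun y : D => ∃ m : C, M m ∧ Nonempty (y ≅ Q.obj m))
  have hJ : IsTriangulatedSub J := triClosure_isTriangulatedSub _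
  have hI : IsTriangulatedSub I := triClosure_isTriangulatedSub _
  have hNJ : ∀ z, N z → J z := fun z hz => triClosure_of_mem (Or.inl hz)
  have hJsat : ∀ ⦃y z : C⦄, (Q.obj y ≅ Q.obj z) → J z → J y :=
    fun _ _ e hz => mem_of_iso_obj Q hN hNthick hJ hNJ e hz
  have := mapArrow_essSurj Q hN
  constructor
  · refine fun hx => hx _ (hI.inverseImage Q) ?_
    rintro z (hz | hz)
    · exact hI.zero _ (isZero_obj_of_mem Q hN hz)
    · exact triClosure_of_mem ⟨z, hz, ⟨Iso.refl _⟩⟩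
  · intro hx
    obtain ⟨y, hy, ⟨e⟩⟩ := hx _ (hJ.map hJsat)
      fun _ ⟨m, hm, ⟨e⟩⟩ => ⟨m, triClosure_of_mem (Or.inr hm), ⟨e.symm⟩⟩
    exact hJsat e.symm hy
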